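/- There exists an almost periodic function b : ℝ → ℝ such that the space of bounded solutions of the equation u'' + b(x)u' = 0 on ℝ has dimension 2, and is generated by the constant function u₁ ≡ 1 and a function u₂ which is not almost periodic. -/

import Mathlib

open Filter Topology

noncomputable section

/-- A continuous function `φ : ℝ → ℝ` is almost periodic (Bochner's
characterization): from every sequence of real translations one can extract a
subsequence along which the translates of `φ` converge uniformly on `ℝ`. -/
def AlmostPeriodic1 (φ : ℝ → ℝ) : Prop :=
  Continuous φ ∧ ∀ s : ℕ → ℝ, ∃ k : ℕ → ℕ, StrictMono k ∧
    ∃ ψ : ℝ → ℝ, TendstoUniformly (fun n x => φ (x + s (k n))) ψ atTop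

namespace CE15

def lam (n : ℕ) : ℝ := (3:ℝ)⁻¹ ^ n

lemma lam_pos (n : ℕ) : 0 < lam n := by unfold lam; positivity

lemma two_mul_lam (n : ℕ) : (2:ℝ)^n * lam n = (2/3:ℝ)^n := by
  rw [lam, ← mul_pow]; norm_num

def Bf (x : ℝ) : ℝ := ∑' n, (2:ℝ)^n * (1 - Real.cos (lam n * x))
def bf (x : ℝ) : ℝ := ∑' n, (2/3:ℝ)^n * Real.sin (lam n * x)

lemma summable_geom : Summable (fun n => (2/3:ℝ)^n) :=
  summable_geometric_of_lt_one (by norm_num) (by norm_num)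

lemma hasDerivAt_term (n : ℕ) (x : ℝ) :
    HasDerivAt (fun y => (2:ℝ)^n * (1 - Real.cos (lam n * y)))
      ((2/3:ℝ)^n * Real.sin (lam n * x)) x := by
  have h1 : HasDerivAt (fun y : ℝ => lam n * y) (lam n) x := by
    simpa using (hasDerivAt_id x).const_mul (lam n)
  have h2 : HasDerivAt (fun y => Real.cos (lam n * y)) (-Real.sin (lam n * x) * lam n) x :=
    (Real.hasDerivAt_cos _).comp x h1
  have h3 := ((hasDerivAt_const x (1:ℝ)).sub h2).const_mul ((2:ℝ)^n)
  exact h3.congr_deriv (by rw [← two_mul_lam]; ring)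

lemma term_bound (n : ℕ) (x : ℝ) : ‖(2/3:ℝ)^n * Real.sin (lam n * x)‖ ≤ (2/3:ℝ)^n := by
  rw [Real.norm_eq_abs, abs_mul, abs_of_nonneg (by positivity : (0:ℝ) ≤ (2/3:ℝ)^n)]
  nlinarith [Real.abs_sin_le_one (lam n * x), pow_nonneg (by norm_num : (0:ℝ) ≤ 2/3) n]

lemma summable_B0 : Summable (fun n => (2:ℝ)^n * (1 - Real.cos (lam n * 0))) := by
  simp

lemma hasDerivAt_Bf (x : ℝ) : HasDerivAt Bf (bf x) x :=
  hasDerivAt_tsum summable_geom (fun n y => hasDerivAt_term n y)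
    (fun n y => term_bound n y) summable_B0 x

lemma summable_Bterm2 (x : ℝ) : Summable (fun n => (2:ℝ)^n * (1 - Real.cos (lam n * x))) :=
  summable_of_summable_hasDerivAt summable_geom (fun n y => hasDerivAt_term n y)
    (fun n y => term_bound n y) summable_B0 x

lemma Bterm_nonneg (n : ℕ) (x : ℝ) : 0 ≤ (2:ℝ)^n * (1 - Real.cos (lam n * x)) := by
  have := Real.cos_le_one (lam n * x)
  have : (0:ℝ) ≤ 1 - Real.cos (lam n * x) := by linarith
  positivity

lemma Bf_nonneg (x : ℝ) : 0 ≤ Bf x := tsum_nonneg (fun n => Bterm_nonneg n x)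

lemma Bf_zero : Bf 0 = 0 := by
  unfold Bf; simp

lemma differentiable_Bf : Differentiable ℝ Bf := fun x => (hasDerivAt_Bf x).differentiableAt

lemma continuous_Bf : Continuous Bf := differentiable_Bf.continuous

lemma continuous_bf : Continuous bf :=
  continuous_tsum (fun n => by continuity) summable_geom (fun n x => term_bound n x)

lemma cos_one_bound : Real.cos 1 ≤ 4/5 := by
  have h := Real.cos_le_one_sub_mul_cos_sq (x := 1)
    (by rw [abs_one]; linarith [Real.pi_gt_three])
  have h3 : (0:ℝ) < Real.pi := Real.pi_pos
  have h2 : Real.pi ^ 2 ≤ 10 := by nlinarith [Real.pi_lt_d2]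
  have h4 : (1/5 : ℝ) ≤ 2 / Real.pi ^ 2 := by
    rw [div_le_div_iff₀ (by norm_num) (by positivity)]
    nlinarith
  nlinarith

lemma Bf_ge (n : ℕ) (x : ℝ) (h1 : 1 ≤ lam n * |x|) (h3 : lam n * |x| ≤ 3) :
    (1/5:ℝ) * 2^n ≤ Bf x := by
  have hpi : (3:ℝ) ≤ Real.pi := Real.pi_gt_three.le
  have hc : Real.cos (lam n * x) ≤ 4/5 := by
    have habs : Real.cos (lam n * x) = Real.cos (lam n * |x|) := by
      rw [← Real.cos_abs, abs_mul, abs_of_pos (lam_pos n)]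
    rw [habs]
    exact (Real.cos_le_cos_of_nonneg_of_le_pi (by norm_num) (by linarith) h1).trans cos_one_bound
  have hterm : (1/5:ℝ) * 2^n ≤ (2:ℝ)^n * (1 - Real.cos (lam n * x)) := by
    have hp : (0:ℝ) < 2^n := by positivity
    nlinarith
  exact hterm.trans (Summable.le_tsum (summable_Bterm2 x) n (fun m _ => Bterm_nonneg m x))

lemma pow9 (n : ℕ) : (9:ℝ)^n ≤ 9^4 * Real.exp (1/5 * 2^n) := by
  induction n with
  | zero =>
    have := Real.one_le_exp (show (0:ℝ) ≤ 1/5 * 2^0 by norm_num)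
    nlinarith
  | succ n ih =>
    have hexp1 : (1:ℝ) ≤ Real.exp (1/5 * 2^n) := Real.one_le_exp (by positivity)
    rcases lt_or_ge n 4 with h | h
    · have h91 : (9:ℝ)^(n+1) ≤ 9^4 := by
        apply pow_le_pow_right₀ (by norm_num)
        omega
      have hexp2 : (1:ℝ) ≤ Real.exp (1/5 * 2^(n+1)) := Real.one_le_exp (by positivity)
      have : (0:ℝ) < 9^4 := by norm_num
      nlinarith
    · have h16 : (16:ℝ) ≤ 2^n := by
        calc (16:ℝ) = 2^4 := by norm_num
        _ ≤ 2^n := pow_le_pow_right₀ (by norm_num) h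
      have h9 : (9:ℝ) ≤ Real.exp (1/5 * 2^n) := by
        have he : (9/5:ℝ) ≤ Real.exp (4/5) := by
          nlinarith [Real.add_one_le_exp (4/5 : ℝ)]
        calc (9:ℝ) ≤ ((9:ℝ)/5)^4 := by norm_num
        _ ≤ (Real.exp (4/5))^4 := by
            apply pow_le_pow_left₀ (by norm_num) he
        _ = Real.exp (16/5) := by
            rw [← Real.exp_nat_mul]; norm_num
        _ ≤ Real.exp (1/5 * 2^n) := Real.exp_le_exp.2 (by linarith)
      calc (9:ℝ)^(n+1) = 9 * 9^n := by ring
      _ ≤ Real.exp (1/5 * 2^n) * (9^4 * Real.exp (1/5 * 2^n)) := by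
          have h9n : (0:ℝ) ≤ 9^n := by positivity
          nlinarith
      _ = 9^4 * Real.exp (1/5 * 2^(n+1)) := by
          rw [mul_comm, mul_assoc, ← Real.exp_add]
          congr 1
          ring

lemma exists_annulus (y : ℝ) (hy : 1 ≤ y) : ∃ n : ℕ, (3:ℝ)^n ≤ y ∧ y ≤ 3^(n+1) := by
  have hex : ∃ m : ℕ, y < 3^m := pow_unbounded_of_one_lt y (by norm_num)
  classical
  have hm : y < 3^(Nat.find hex) := Nat.find_spec hex
  rcases Nat.eq_zero_or_pos (Nat.find hex) with h0 | h0
  · exfalso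
    rw [h0] at hm
    norm_num at hm
    linarith
  · refine ⟨Nat.find hex - 1, not_lt.1 (Nat.find_min hex (Nat.sub_lt h0 one_pos)), ?_⟩
    have : Nat.find hex - 1 + 1 = Nat.find hex := Nat.succ_pred_eq_of_pos h0
    rw [this]
    exact hm.le

lemma key_bound (x : ℝ) : Real.exp (-Bf x) * (1 + x^2) ≤ 65610 := by
  have hexp1 : Real.exp (-Bf x) ≤ 1 := Real.exp_le_one_iff.2 (neg_nonpos.2 (Bf_nonneg x))
  have hexp0 : (0:ℝ) < Real.exp (-Bf x) := Real.exp_pos _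
  rcases le_or_gt (|x|) 1 with h | h
  · have hx2 : x^2 ≤ 1 := by
      rw [← sq_abs]; nlinarith [abs_nonneg x]
    nlinarith
  · obtain ⟨n, hn1, hn2⟩ := exists_annulus (|x|) h.le
    have h3n : (0:ℝ) < 3^n := by positivity
    have hlam : lam n * |x| = |x| / 3^n := by
      rw [lam, inv_pow]; ring
    have hB := Bf_ge n x ?_ ?_
    · have h2 : Real.exp (-Bf x) ≤ Real.exp (-(1/5 * 2^n)) := Real.exp_le_exp.2 (by linarith)
      have h9 : Real.exp (-(1/5 * 2^n)) * 9^n ≤ 9^4 := by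
        rw [Real.exp_neg]
        have hp := pow9 n
        have he : (0:ℝ) < Real.exp (1/5 * 2^n) := Real.exp_pos _
        rw [inv_mul_eq_div, div_le_iff₀ he]
        linarith [pow9 n]
      have hx2 : 1 + x^2 ≤ 10 * 9^n := by
        have hs : x^2 = |x|^2 := (sq_abs x).symm
        have h3 : |x|^2 ≤ ((3:ℝ)^(n+1))^2 := by
          apply pow_le_pow_left₀ (abs_nonneg x) hn2
        have h4 : ((3:ℝ)^(n+1))^2 = 9 * 9^n := by
          rw [← pow_mul, mul_comm (n+1) 2, pow_mul]
          norm_num [pow_succ]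
          ring
        have h1n : (1:ℝ) ≤ 9^n := one_le_pow₀ (by norm_num)
        nlinarith
      have h9n : (0:ℝ) < 9^n := by positivity
      calc Real.exp (-Bf x) * (1 + x^2) ≤ Real.exp (-(1/5 * 2^n)) * (10 * 9^n) := by
            apply mul_le_mul h2 hx2 (by positivity) (Real.exp_pos _).le
      _ = (Real.exp (-(1/5 * 2^n)) * 9^n) * 10 := by ring
      _ ≤ 9^4 * 10 := by nlinarith
      _ = 65610 := by norm_num
    · rw [hlam, le_div_iff₀ h3n]; linarith
    · rw [hlam, div_le_iff₀ h3n]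
      calc |x| ≤ 3^(n+1) := hn2
      _ = 3 * 3^n := by rw [pow_succ]; ring

open MeasureTheory in
lemma integrable_expB : Integrable (fun x => Real.exp (-Bf x)) := by
  have hc : Continuous fun x => Real.exp (-Bf x) := Real.continuous_exp.comp continuous_Bf.neg
  refine (integrable_inv_one_add_sq.const_mul 65610).mono' hc.aestronglyMeasurable ?_
  filter_upwards with x
  rw [Real.norm_eq_abs, abs_of_pos (Real.exp_pos _)]
  have hb : (0:ℝ) < 1 + x^2 := by positivity
  have := key_bound x
  calc Real.exp (-Bf x) = (Real.exp (-Bf x) * (1 + x^2)) * (1 + x^2)⁻¹ := by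
        field_simp
  _ ≤ 65610 * (1 + x^2)⁻¹ := by
        apply mul_le_mul_of_nonneg_right this (by positivity)

def u2 (x : ℝ) : ℝ := ∫ t in (0:ℝ)..x, Real.exp (-Bf t)

lemma continuous_expB : Continuous fun x => Real.exp (-Bf x) :=
  Real.continuous_exp.comp continuous_Bf.neg

lemma hasDerivAt_u2 (x : ℝ) : HasDerivAt u2 (Real.exp (-Bf x)) x :=
  (continuous_expB.integral_hasStrictDerivAt 0 x).hasDerivAt

lemma deriv_u2 : deriv u2 = fun x => Real.exp (-Bf x) :=
  funext fun x => (hasDerivAt_u2 x).deriv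

lemma hasDerivAt_expB (x : ℝ) :
    HasDerivAt (fun x => Real.exp (-Bf x)) (Real.exp (-Bf x) * (-bf x)) x :=
  (hasDerivAt_Bf x).neg.exp

lemma contDiff_expB : ContDiff ℝ 1 (fun x => Real.exp (-Bf x)) := by
  rw [contDiff_one_iff_deriv]
  constructor
  · exact fun x => (hasDerivAt_expB x).differentiableAt
  · have hd : deriv (fun x => Real.exp (-Bf x)) = fun x => Real.exp (-Bf x) * (-bf x) :=
      funext fun x => (hasDerivAt_expB x).deriv
    rw [hd]
    exact continuous_expB.mul continuous_bf.neg

lemma contDiff_u2 : ContDiff ℝ 2 u2 := by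
  rw [show (2 : WithTop ℕ∞) = 1 + 1 from rfl, contDiff_succ_iff_deriv]
  refine ⟨fun x => (hasDerivAt_u2 x).differentiableAt, by simp, ?_⟩
  rw [deriv_u2]
  exact contDiff_expB

lemma u2_ode (x : ℝ) : deriv (deriv u2) x + bf x * deriv u2 x = 0 := by
  rw [deriv_u2, (hasDerivAt_expB x).deriv]
  ring

open MeasureTheory in
lemma u2_bound (x : ℝ) : |u2 x| ≤ ∫ t, Real.exp (-Bf t) := by
  have h1 : |u2 x| ≤ ∫ t in Set.uIoc 0 x, ‖Real.exp (-Bf t)‖ := by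
    rw [← Real.norm_eq_abs]
    exact intervalIntegral.norm_integral_le_integral_norm_uIoc
  refine h1.trans ?_
  have h2 : (fun t => ‖Real.exp (-Bf t)‖) = fun t => Real.exp (-Bf t) := by
    funext t
    rw [Real.norm_eq_abs, abs_of_pos (Real.exp_pos _)]
  rw [h2]
  exact setIntegral_le_integral integrable_expB
    (Filter.Eventually.of_forall fun t => (Real.exp_pos _).le)

def Lval : ℝ := ∫ t in Set.Ioi (0:ℝ), Real.exp (-Bf t)

open MeasureTheory in
lemma tendsto_u2 : Tendsto u2 atTop (𝓝 Lval) :=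
  intervalIntegral_tendsto_integral_Ioi 0 integrable_expB.integrableOn tendsto_id

lemma strictMono_u2 : StrictMono u2 :=
  strictMono_of_deriv_pos (fun x => by rw [deriv_u2]; exact Real.exp_pos _)

lemma u2_zero : u2 0 = 0 := intervalIntegral.integral_same

lemma Lval_pos : 0 < Lval := by
  have h1 : u2 0 < u2 1 := strictMono_u2 (by norm_num)
  have h2 : u2 1 ≤ Lval := by
    apply ge_of_tendsto tendsto_u2
    filter_upwards [eventually_ge_atTop (1:ℝ)] with y hy
    exact (strictMono_u2.le_iff_le).2 hy
  rw [u2_zero] at h1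
  linarith

lemma u2_not_ap : ¬ AlmostPeriodic1 u2 := by
  rintro ⟨-, h⟩
  obtain ⟨k, hk, ψ, hψ⟩ := h (fun n => (n:ℝ))
  have hk' : Tendsto (fun n => ((k n : ℕ) : ℝ)) atTop atTop :=
    tendsto_natCast_atTop_atTop.comp hk.tendsto_atTop
  have hpt : ∀ x : ℝ, Tendsto (fun n => u2 (x + (k n : ℝ))) atTop (𝓝 Lval) := by
    intro x
    exact tendsto_u2.comp (tendsto_atTop_add_const_left _ x hk')
  have hψL : ∀ x : ℝ, ψ x = Lval := fun x =>
    tendsto_nhds_unique (hψ.tendsto_at x) (hpt x)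
  rw [Metric.tendstoUniformly_iff] at hψ
  obtain ⟨n, hn⟩ := (hψ Lval Lval_pos).exists
  have h0 := hn (-(k n : ℝ))
  rw [hψL, neg_add_cancel, u2_zero, Real.dist_eq, sub_zero, abs_of_pos Lval_pos] at h0
  exact lt_irrefl _ h0

lemma unique_sol (u : ℝ → ℝ) (hu : ContDiff ℝ 2 u)
    (hode : ∀ x, deriv (deriv u) x + bf x * deriv u x = 0) :
    ∀ x, u x = u 0 + deriv u 0 * u2 x := by
  have hdu : Differentiable ℝ u := hu.differentiable (by norm_num)
  have hdu2 : Differentiable ℝ (deriv u) := by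
    rw [show (2 : WithTop ℕ∞) = 1 + 1 from rfl, contDiff_succ_iff_deriv] at hu
    exact hu.2.2.differentiable (by norm_num)
  have hgd : ∀ x, HasDerivAt (fun x => deriv u x * Real.exp (Bf x)) 0 x := by
    intro x
    have h1 : HasDerivAt (deriv u) (deriv (deriv u) x) x := (hdu2 x).hasDerivAt
    have h2 : HasDerivAt (fun x => Real.exp (Bf x)) (Real.exp (Bf x) * bf x) x :=
      (hasDerivAt_Bf x).exp
    have h3 := h1.mul h2
    refine h3.congr_deriv ?_
    have h4 := hode x
    have : deriv (deriv u) x = -(bf x * deriv u x) := by linarith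
    rw [this]
    ring
  have hconst : ∀ x, deriv u x * Real.exp (Bf x) = deriv u 0 * Real.exp (Bf 0) := fun x =>
    is_const_of_deriv_eq_zero (fun y => (hgd y).differentiableAt)
      (fun y => (hgd y).deriv) x 0
  have hder : ∀ x, deriv u x = deriv u 0 * Real.exp (-Bf x) := by
    intro x
    have h5 := hconst x
    rw [Bf_zero, Real.exp_zero, mul_one] at h5
    rw [Real.exp_neg, ← h5]
    field_simp
  have hzero : ∀ x, HasDerivAt (fun x => u x - (u 0 + deriv u 0 * u2 x)) 0 x := by
    intro x
    have h1 : HasDerivAt u (deriv u x) x := (hdu x).hasDerivAt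
    have h2 := (hasDerivAt_u2 x).const_mul (deriv u 0)
    have h3 := h1.sub ((hasDerivAt_const x (u 0)).add h2)
    refine h3.congr_deriv ?_
    rw [hder x]
    ring
  intro x
  have h6 : u x - (u 0 + deriv u 0 * u2 x) = u 0 - (u 0 + deriv u 0 * u2 0) :=
    is_const_of_deriv_eq_zero (fun y => (hzero y).differentiableAt)
      (fun y => (hzero y).deriv) x 0
  rw [u2_zero] at h6
  have : u x - (u 0 + deriv u 0 * u2 x) = 0 := by rw [h6]; ring
  linarith

/-! ### Almost periodicity of `bf` -/

def coefFun (p : ℕ → ℝ × ℝ) (x : ℝ) : ℝ :=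
  ∑' n, (2/3:ℝ)^n * (Real.sin (lam n * x) * (p n).1 + Real.cos (lam n * x) * (p n).2)

def Kset : Set (ℕ → ℝ × ℝ) :=
  Set.univ.pi fun _ => Set.Icc (-1:ℝ) 1 ×ˢ Set.Icc (-1:ℝ) 1

lemma Kset_compact : IsCompact Kset :=
  isCompact_univ_pi fun _ => isCompact_Icc.prod isCompact_Icc

lemma mem_Kset_iff {p : ℕ → ℝ × ℝ} :
    p ∈ Kset ↔ ∀ n, |(p n).1| ≤ 1 ∧ |(p n).2| ≤ 1 := by
  simp only [Kset, Set.mem_pi, Set.mem_univ, forall_true_left, Set.mem_prod, Set.mem_Icc,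
    abs_le]

def pvec (s : ℝ) (n : ℕ) : ℝ × ℝ := (Real.cos (lam n * s), Real.sin (lam n * s))

lemma pvec_mem (s : ℝ) : pvec s ∈ Kset := by
  rw [mem_Kset_iff]
  intro n
  exact ⟨Real.abs_cos_le_one _, Real.abs_sin_le_one _⟩

lemma coef_term_bound {p : ℕ → ℝ × ℝ} (hp : p ∈ Kset) (x : ℝ) (n : ℕ) :
    ‖(2/3:ℝ)^n * (Real.sin (lam n * x) * (p n).1 + Real.cos (lam n * x) * (p n).2)‖
      ≤ 2 * (2/3:ℝ)^n := by
  obtain ⟨h1, h2⟩ := mem_Kset_iff.1 hp n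
  have hs := Real.abs_sin_le_one (lam n * x)
  have hc := Real.abs_cos_le_one (lam n * x)
  have hge : (0:ℝ) ≤ (2/3:ℝ)^n := by positivity
  rw [Real.norm_eq_abs, abs_mul, abs_of_nonneg hge]
  have habs : |Real.sin (lam n * x) * (p n).1 + Real.cos (lam n * x) * (p n).2| ≤ 2 := by
    calc |Real.sin (lam n * x) * (p n).1 + Real.cos (lam n * x) * (p n).2|
        ≤ |Real.sin (lam n * x) * (p n).1| + |Real.cos (lam n * x) * (p n).2| := abs_add_le _ _
    _ = |Real.sin (lam n * x)| * |(p n).1| + |Real.cos (lam n * x)| * |(p n).2| := by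
        rw [abs_mul, abs_mul]
    _ ≤ 1 + 1 := add_le_add (mul_le_one₀ hs (abs_nonneg _) h1)
          (mul_le_one₀ hc (abs_nonneg _) h2)
    _ = 2 := by norm_num
  nlinarith

lemma coef_summable {p : ℕ → ℝ × ℝ} (hp : p ∈ Kset) (x : ℝ) :
    Summable (fun n =>
      (2/3:ℝ)^n * (Real.sin (lam n * x) * (p n).1 + Real.cos (lam n * x) * (p n).2)) := by
  apply Summable.of_norm_bounded (summable_geom.mul_left 2)
  exact coef_term_bound hp x

lemma bf_shift (s x : ℝ) : bf (x + s) = coefFun (pvec s) x := by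
  unfold bf coefFun
  apply tsum_congr
  intro n
  rw [mul_add, Real.sin_add, pvec]

lemma dist_term_bound {p q : ℕ → ℝ × ℝ} (x : ℝ) (n : ℕ) :
    |(2/3:ℝ)^n * (Real.sin (lam n * x) * (p n).1 + Real.cos (lam n * x) * (p n).2)
      - (2/3:ℝ)^n * (Real.sin (lam n * x) * (q n).1 + Real.cos (lam n * x) * (q n).2)|
    ≤ (2/3:ℝ)^n * (|(p n).1 - (q n).1| + |(p n).2 - (q n).2|) := by
  have hs := Real.abs_sin_le_one (lam n * x)
  have hc := Real.abs_cos_le_one (lam n * x)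
  have hge : (0:ℝ) ≤ (2/3:ℝ)^n := by positivity
  have key : |Real.sin (lam n * x) * ((p n).1 - (q n).1)
      + Real.cos (lam n * x) * ((p n).2 - (q n).2)|
      ≤ |(p n).1 - (q n).1| + |(p n).2 - (q n).2| := by
    calc _ ≤ |Real.sin (lam n * x) * ((p n).1 - (q n).1)|
        + |Real.cos (lam n * x) * ((p n).2 - (q n).2)| := abs_add_le _ _
    _ = |Real.sin (lam n * x)| * |(p n).1 - (q n).1|
        + |Real.cos (lam n * x)| * |(p n).2 - (q n).2| := by rw [abs_mul, abs_mul]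
    _ ≤ 1 * |(p n).1 - (q n).1| + 1 * |(p n).2 - (q n).2| := by
        apply add_le_add <;> apply mul_le_mul_of_nonneg_right <;> first
          | assumption | exact abs_nonneg _
    _ = _ := by ring
  have heq : (2/3:ℝ)^n * (Real.sin (lam n * x) * (p n).1 + Real.cos (lam n * x) * (p n).2)
      - (2/3:ℝ)^n * (Real.sin (lam n * x) * (q n).1 + Real.cos (lam n * x) * (q n).2)
      = (2/3:ℝ)^n * (Real.sin (lam n * x) * ((p n).1 - (q n).1)
        + Real.cos (lam n * x) * ((p n).2 - (q n).2)) := by ring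
  rw [heq, abs_mul, abs_of_nonneg hge]
  exact mul_le_mul_of_nonneg_left key hge

def Dfun (p q : ℕ → ℝ × ℝ) : ℝ :=
  ∑' n, (2/3:ℝ)^n * (|(p n).1 - (q n).1| + |(p n).2 - (q n).2|)

lemma Dfun_term_bound {p q : ℕ → ℝ × ℝ} (hp : p ∈ Kset) (hq : q ∈ Kset) (n : ℕ) :
    ‖(2/3:ℝ)^n * (|(p n).1 - (q n).1| + |(p n).2 - (q n).2|)‖ ≤ 4 * (2/3:ℝ)^n := by
  obtain ⟨hp1, hp2⟩ := mem_Kset_iff.1 hp n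
  obtain ⟨hq1, hq2⟩ := mem_Kset_iff.1 hq n
  have hge : (0:ℝ) ≤ (2/3:ℝ)^n := by positivity
  have h1 : |(p n).1 - (q n).1| ≤ 2 := by
    calc |(p n).1 - (q n).1| ≤ |(p n).1| + |(q n).1| := abs_sub _ _
    _ ≤ 2 := by linarith
  have h2 : |(p n).2 - (q n).2| ≤ 2 := by
    calc |(p n).2 - (q n).2| ≤ |(p n).2| + |(q n).2| := abs_sub _ _
    _ ≤ 2 := by linarith
  rw [Real.norm_eq_abs, abs_mul, abs_of_nonneg hge,
    abs_of_nonneg (by positivity : (0:ℝ) ≤ |(p n).1 - (q n).1| + |(p n).2 - (q n).2|)]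
  nlinarith

lemma Dfun_summable {p q : ℕ → ℝ × ℝ} (hp : p ∈ Kset) (hq : q ∈ Kset) :
    Summable (fun n => (2/3:ℝ)^n * (|(p n).1 - (q n).1| + |(p n).2 - (q n).2|)) := by
  apply Summable.of_norm_bounded (summable_geom.mul_left 4)
  exact Dfun_term_bound hp hq

lemma coef_dist_bound {p q : ℕ → ℝ × ℝ} (hp : p ∈ Kset) (hq : q ∈ Kset) (x : ℝ) :
    |coefFun p x - coefFun q x| ≤ Dfun p q := by
  unfold coefFun Dfun
  rw [← Summable.tsum_sub (coef_summable hp x) (coef_summable hq x)]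
  have hsub : Summable (fun n =>
      (2/3:ℝ)^n * (Real.sin (lam n * x) * (p n).1 + Real.cos (lam n * x) * (p n).2)
      - (2/3:ℝ)^n * (Real.sin (lam n * x) * (q n).1 + Real.cos (lam n * x) * (q n).2)) :=
    (coef_summable hp x).sub (coef_summable hq x)
  have hnorm : Summable (fun n => ‖(2/3:ℝ)^n
      * (Real.sin (lam n * x) * (p n).1 + Real.cos (lam n * x) * (p n).2)
      - (2/3:ℝ)^n * (Real.sin (lam n * x) * (q n).1 + Real.cos (lam n * x) * (q n).2)‖) := by
    apply Summable.of_nonneg_of_le (fun n => norm_nonneg _) ?_ (Dfun_summable hp hq)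
    intro n
    rw [Real.norm_eq_abs]
    exact dist_term_bound x n
  calc |∑' n, ((2/3:ℝ)^n * (Real.sin (lam n * x) * (p n).1 + Real.cos (lam n * x) * (p n).2)
      - (2/3:ℝ)^n * (Real.sin (lam n * x) * (q n).1 + Real.cos (lam n * x) * (q n).2))|
      ≤ ∑' n, |(2/3:ℝ)^n * (Real.sin (lam n * x) * (p n).1 + Real.cos (lam n * x) * (p n).2)
      - (2/3:ℝ)^n * (Real.sin (lam n * x) * (q n).1 + Real.cos (lam n * x) * (q n).2)| := by
        rw [← Real.norm_eq_abs]
        refine (norm_tsum_le_tsum_norm hnorm).trans_eq ?_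
        apply tsum_congr
        intro n
        rw [Real.norm_eq_abs]
  _ ≤ _ := Summable.tsum_le_tsum (fun n => dist_term_bound x n) hnorm (Dfun_summable hp hq)

lemma bf_ap : AlmostPeriodic1 bf := by
  refine ⟨continuous_bf, ?_⟩
  intro s
  obtain ⟨q, hqK, k, hk, hconv⟩ :=
    Kset_compact.tendsto_subseq (x := fun j => pvec (s j)) (fun j => pvec_mem (s j))
  refine ⟨k, hk, coefFun q, ?_⟩
  have hD : Tendsto (fun j => Dfun (pvec (s (k j))) q) atTop (𝓝 0) := by
    have h0 : (0:ℝ) = ∑' (n : ℕ), (0:ℝ) := by rw [tsum_zero]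
    rw [h0]
    apply tendsto_tsum_of_dominated_convergence (bound := fun n => 4 * (2/3:ℝ)^n)
      (summable_geom.mul_left 4)
    · intro n
      have hcoord : Tendsto (fun j => pvec (s (k j)) n) atTop (𝓝 (q n)) :=
        (tendsto_pi_nhds.1 hconv n)
      have h1 : Tendsto (fun j => |(pvec (s (k j)) n).1 - (q n).1|) atTop (𝓝 0) := by
        have hf : Tendsto (fun j => (pvec (s (k j)) n).1) atTop (𝓝 (q n).1) :=
          (continuous_fst.tendsto (q n)).comp hcoord
        have := (hf.sub_const ((q n).1)).abs
        simpa using this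
      have h2 : Tendsto (fun j => |(pvec (s (k j)) n).2 - (q n).2|) atTop (𝓝 0) := by
        have hf : Tendsto (fun j => (pvec (s (k j)) n).2) atTop (𝓝 (q n).2) :=
          (continuous_snd.tendsto (q n)).comp hcoord
        have := (hf.sub_const ((q n).2)).abs
        simpa using this
      have := (h1.add h2).const_mul ((2/3:ℝ)^n)
      simpa using this
    · filter_upwards with j n
      exact Dfun_term_bound (pvec_mem _) hqK n
  rw [Metric.tendstoUniformly_iff]
  intro ε hε
  filter_upwards [hD.eventually (gt_mem_nhds hε)] with j hj x
  rw [Real.dist_eq, bf_shift]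
  calc |coefFun q x - coefFun (pvec (s (k j))) x|
      = |coefFun (pvec (s (k j))) x - coefFun q x| := by rw [abs_sub_comm]
  _ ≤ Dfun (pvec (s (k j))) q := coef_dist_bound (pvec_mem _) hqK x
  _ < ε := hj

end CE15

/-- **Counterexample 1.5.**  There exists an almost periodic function `b : ℝ → ℝ`
such that the space of bounded solutions of `u'' + b u' = 0` on `ℝ` has dimension 2,
generated by the constant function `1` and a bounded solution `u₂` which is not
almost periodic. -/


theorem counterexample_almost_periodic :
    ∃ b : ℝ → ℝ, AlmostPeriodic1 b ∧
      ∃ u₂ : ℝ → ℝ,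
        ContDiff ℝ 2 u₂ ∧
        (∀ x : ℝ, deriv (deriv u₂) x + b x * deriv u₂ x = 0) ∧
        (∃ M : ℝ, ∀ x, |u₂ x| ≤ M) ∧
        ¬ AlmostPeriodic1 u₂ ∧
        (∀ u : ℝ → ℝ, ContDiff ℝ 2 u →
          (∀ x : ℝ, deriv (deriv u) x + b x * deriv u x = 0) →
          (∃ M : ℝ, ∀ x, |u x| ≤ M) →
          ∃ α β : ℝ, ∀ x, u x = α + β * u₂ x) := by
  refine ⟨CE15.bf, CE15.bf_ap, CE15.u2, CE15.contDiff_u2, CE15.u2_ode,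
    ⟨_, CE15.u2_bound⟩, CE15.u2_not_ap, ?_⟩
  intro u hu hode _
  exact ⟨u 0, deriv u 0, CE15.unique_sol u hu hode⟩
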